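/- arXiv:2603.29350 — 2 statements merged into one kernel-verified Lean document; each statement's English description precedes it below -/
import Mathlib

section
/- For the complete graph K_n on n ≥ 1 vertices, the boundary polynomial satisfies B(K_n;x,y) = (x+y)^n + 1 - x^n. -/
open Finset Real
open scoped Classical

noncomputable def gBoundary {V : Type*} [Fintype V] (G : SimpleGraph V) (S : Finset V) :
    Finset V :=
  Finset.univ.filter (fun v => v ∉ S ∧ ∃ u ∈ S, G.Adj u v)

noncomputable def boundaryPoly {V : Type*} [Fintype V] (G : SimpleGraph V) (x y : ℝ) : ℝ :=
  ∑ S : Finset V, x ^ (gBoundary G S).card * y ^ S.card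

noncomputable def Bcoef {V : Type*} [Fintype V] (G : SimpleGraph V) (i j : ℕ) : ℕ :=
  ((Finset.univ : Finset (Finset V)).filter
    (fun S => (gBoundary G S).card = i ∧ S.card = j)).card

theorem boundaryPoly_completeGraph (n : ℕ) (hn : 1 ≤ n) (x y : ℝ) :
    boundaryPoly (⊤ : SimpleGraph (Fin n)) x y = (x + y) ^ n + 1 - x ^ n := by
  have key : ∀ S : Finset (Fin n),
      gBoundary (⊤ : SimpleGraph (Fin n)) S = if S = ∅ then ∅ else Sᶜ := by
    intro S
    unfold gBoundary
    split_ifs with h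
    · subst h; simp
    · obtain ⟨u, hu⟩ := Finset.nonempty_iff_ne_empty.2 h
      ext v
      simp only [mem_filter, mem_univ, true_and, mem_compl, SimpleGraph.top_adj]
      constructor
      · rintro ⟨hv, _⟩; exact hv
      · intro hv; exact ⟨hv, u, hu, fun e => hv (e ▸ hu)⟩
  have hsum : ∑ S : Finset (Fin n), x ^ Sᶜ.card * y ^ S.card = (x + y) ^ n := by
    have := Finset.prod_add (fun _ : Fin n => y) (fun _ : Fin n => x) Finset.univ
    simp only [Finset.prod_const, Finset.powerset_univ, Finset.card_univ,
      Fintype.card_fin] at this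
    rw [add_comm x y, this]
    apply Finset.sum_congr rfl
    intro S _
    rw [mul_comm, ← Finset.compl_eq_univ_sdiff]
  have hterm : ∀ S : Finset (Fin n),
      x ^ (gBoundary (⊤ : SimpleGraph (Fin n)) S).card * y ^ S.card
        = x ^ Sᶜ.card * y ^ S.card + (if S = ∅ then 1 - x ^ n else 0) := by
    intro S
    rw [key]
    split_ifs with h
    · subst h
      simp [Finset.card_univ]
    · simp
  unfold boundaryPoly
  simp only [hterm, Finset.sum_add_distrib, hsum,
    Finset.sum_ite_eq' Finset.univ (∅ : Finset (Fin n)) (fun _ => 1 - x ^ n),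
    Finset.mem_univ, if_true]
  ring
end

section
/- For n ≥ 4, both the complete graph K_n and the wheel graph W_n satisfy B_{0,3} = B_{1,2} = B_{2,1} = B_{0,2} = 0; hence the quantity 3B_{0,3} + B_{1,2} + B_{2,1} + 2(B_{0,2})² vanishes for these graphs. -/
open Finset Real
open scoped Classical

/-- The wheel graph with hub `none` and rim the cycle on `ZMod m` (so `m + 1` vertices
in total): the hub is adjacent to every rim vertex, and rim vertices `u`, `v` are
adjacent iff they differ by `1`. -/
noncomputable def wheelGraph (m : ℕ) : SimpleGraph (Option (ZMod m)) :=
  SimpleGraph.fromRel (fun a b =>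
    (a = none ∧ b ≠ none) ∨ (∃ u v : ZMod m, a = some u ∧ b = some v ∧ u - v = 1))

lemma mem_gBoundary {V : Type*} [Fintype V] {G : SimpleGraph V} {S : Finset V} {v : V} :
    v ∈ gBoundary G S ↔ v ∉ S ∧ ∃ u ∈ S, G.Adj u v := by
  simp [gBoundary]

lemma Bcoef_eq_zero {V : Type*} [Fintype V] {G : SimpleGraph V} {i j : ℕ}
    (h : ∀ S : Finset V, S.card = j → (gBoundary G S).card ≠ i) : Bcoef G i j = 0 := by
  rw [Bcoef, Finset.card_eq_zero, Finset.filter_eq_empty_iff]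
  rintro S - ⟨h1, h2⟩
  exact h S h2 h1

lemma complete_gBoundary {n : ℕ} {S : Finset (Fin n)} (hS : S.Nonempty) :
    gBoundary (⊤ : SimpleGraph (Fin n)) S = Sᶜ := by
  obtain ⟨a, ha⟩ := hS
  ext v
  simp only [mem_gBoundary, Finset.mem_compl, SimpleGraph.top_adj]
  refine ⟨fun h => h.1, fun hv => ⟨hv, a, ha, fun h => hv (h ▸ ha)⟩⟩

lemma complete_gBoundary_card {n : ℕ} {S : Finset (Fin n)} (hS : S.Nonempty) :
    (gBoundary (⊤ : SimpleGraph (Fin n)) S).card = n - S.card := by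
  rw [complete_gBoundary hS, Finset.card_compl, Fintype.card_fin]

section Wheel
variable {m : ℕ} [NeZero m]

lemma zmod_one_ne_zero (hm : 3 ≤ m) : (1 : ZMod m) ≠ 0 := by
  intro h
  have h2 : m ∣ 1 := (ZMod.natCast_eq_zero_iff 1 m).mp (by exact_mod_cast h)
  have := Nat.le_of_dvd one_pos h2
  omega

lemma zmod_two_ne_zero (hm : 3 ≤ m) : (2 : ZMod m) ≠ 0 := by
  intro h
  have h2 : m ∣ 2 := (ZMod.natCast_eq_zero_iff 2 m).mp (by exact_mod_cast h)
  have := Nat.le_of_dvd two_pos h2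
  omega

omit [NeZero m] in
lemma wheel_adj_hub (u : ZMod m) : (wheelGraph m).Adj none (some u) := by
  simp [wheelGraph, SimpleGraph.fromRel_adj]

omit [NeZero m] in
lemma wheel_adj_hub' (u : ZMod m) : (wheelGraph m).Adj (some u) none :=
  (wheel_adj_hub u).symm

lemma wheel_adj_succ (hm : 3 ≤ m) (u : ZMod m) :
    (wheelGraph m).Adj (some u) (some (u + 1)) := by
  rw [wheelGraph, SimpleGraph.fromRel_adj]
  refine ⟨?_, Or.inr (Or.inr ⟨u + 1, u, rfl, rfl, by ring⟩)⟩
  simp only [Ne, Option.some.injEq]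
  intro h
  exact zmod_one_ne_zero hm (by linear_combination -h)

lemma wheel_adj_pred (hm : 3 ≤ m) (u : ZMod m) :
    (wheelGraph m).Adj (some u) (some (u - 1)) := by
  rw [wheelGraph, SimpleGraph.fromRel_adj]
  refine ⟨?_, Or.inl (Or.inr ⟨u, u - 1, rfl, rfl, by ring⟩)⟩
  simp only [Ne, Option.some.injEq]
  intro h
  exact zmod_one_ne_zero hm (by linear_combination h)

lemma wheel_card_univ : (Finset.univ : Finset (Option (ZMod m))).card = m + 1 := by
  rw [Finset.card_univ, Fintype.card_option, ZMod.card]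

lemma wheel_boundary_nonempty (hm : 3 ≤ m) {S : Finset (Option (ZMod m))} (hS : S.Nonempty)
    (hcard : S.card ≤ 3) : (gBoundary (wheelGraph m) S).Nonempty := by
  by_cases hnone : none ∈ S
  · have hc : (Sᶜ : Finset (Option (ZMod m))).Nonempty := by
      rw [← Finset.card_pos, Finset.card_compl, Fintype.card_option, ZMod.card]
      omega
    obtain ⟨v, hv⟩ := hc
    rw [Finset.mem_compl] at hv
    match v with
    | none => exact absurd hnone hv
    | some w => exact ⟨some w, mem_gBoundary.mpr ⟨hv, none, hnone, wheel_adj_hub w⟩⟩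
  · obtain ⟨a, ha⟩ := hS
    match a with
    | none => exact absurd ha hnone
    | some w => exact ⟨none, mem_gBoundary.mpr ⟨hnone, some w, ha, wheel_adj_hub' w⟩⟩

lemma wheel_singleton_boundary (hm : 3 ≤ m) (a : Option (ZMod m)) :
    2 < (gBoundary (wheelGraph m) {a}).card := by
  rw [Finset.two_lt_card_iff]
  match a with
  | none =>
    refine ⟨some 0, some 1, some 2,
      mem_gBoundary.mpr ⟨by simp, none, by simp, wheel_adj_hub 0⟩,
      mem_gBoundary.mpr ⟨by simp, none, by simp, wheel_adj_hub 1⟩,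
      mem_gBoundary.mpr ⟨by simp, none, by simp, wheel_adj_hub 2⟩, ?_, ?_, ?_⟩ <;>
        simp only [Ne, Option.some.injEq]
    · intro h; exact zmod_one_ne_zero hm (by linear_combination -h)
    · intro h; exact zmod_two_ne_zero hm (by linear_combination -h)
    · intro h; exact zmod_one_ne_zero hm (by linear_combination -h)
  | some u =>
    have h1 : (1 : ZMod m) ≠ 0 := zmod_one_ne_zero hm
    have h2 : (2 : ZMod m) ≠ 0 := zmod_two_ne_zero hm
    refine ⟨none, some (u + 1), some (u - 1), ?_, ?_, ?_, by simp, by simp, ?_⟩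
    · exact mem_gBoundary.mpr ⟨by simp, some u, by simp, wheel_adj_hub' u⟩
    · refine mem_gBoundary.mpr ⟨?_, some u, by simp, wheel_adj_succ hm u⟩
      simp only [Finset.mem_singleton, Option.some.injEq]
      intro h; exact h1 (by linear_combination h)
    · refine mem_gBoundary.mpr ⟨?_, some u, by simp, wheel_adj_pred hm u⟩
      simp only [Finset.mem_singleton, Option.some.injEq]
      intro h; exact h1 (by linear_combination -h)
    · simp only [Ne, Option.some.injEq]
      intro h; exact h2 (by linear_combination h)

lemma wheel_pair_boundary (hm : 3 ≤ m) {S : Finset (Option (ZMod m))} (hS : S.card = 2) :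
    1 < (gBoundary (wheelGraph m) S).card := by
  have h1 : (1 : ZMod m) ≠ 0 := zmod_one_ne_zero hm
  have h2 : (2 : ZMod m) ≠ 0 := zmod_two_ne_zero hm
  rw [Finset.one_lt_card_iff]
  obtain ⟨a, b, hab, rfl⟩ := Finset.card_eq_two.mp hS
  by_cases hnone : none ∈ ({a, b} : Finset (Option (ZMod m)))
  · -- one element is the hub; obtain the rim element
    obtain ⟨u, hu⟩ : ∃ u : ZMod m, ({a, b} : Finset (Option (ZMod m))) = {none, some u} := by
      rcases Finset.mem_insert.mp hnone with h | h
      · subst h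
        match b, hab with
        | some u, _ => exact ⟨u, rfl⟩
      · rw [Finset.mem_singleton] at h; subst h
        match a, hab with
        | some u, _ => exact ⟨u, by rw [Finset.pair_comm]⟩
    rw [hu]
    refine ⟨some (u + 1), some (u - 1), ?_, ?_, ?_⟩
    · refine mem_gBoundary.mpr ⟨?_, none, by simp, wheel_adj_hub _⟩
      simp only [Finset.mem_insert, Finset.mem_singleton, Option.some.injEq, reduceCtorEq,
        false_or]
      intro h; exact h1 (by linear_combination h)
    · refine mem_gBoundary.mpr ⟨?_, none, by simp, wheel_adj_hub _⟩
      simp only [Finset.mem_insert, Finset.mem_singleton, Option.some.injEq, reduceCtorEq,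
        false_or]
      intro h; exact h1 (by linear_combination -h)
    · simp only [Ne, Option.some.injEq]
      intro h; exact h2 (by linear_combination h)
  · -- both rim vertices
    simp only [Finset.mem_insert, Finset.mem_singleton, not_or] at hnone
    obtain ⟨ha, hb⟩ := hnone
    match a, b, ha, hb, hab with
    | some u, some v, _, _, hab =>
      have hnb : none ∈ gBoundary (wheelGraph m) {some u, some v} :=
        mem_gBoundary.mpr ⟨by simp, some u, by simp, wheel_adj_hub' u⟩
      by_cases hc : some (u + 1) ∈ ({some u, some v} : Finset (Option (ZMod m)))
      · refine ⟨none, some (u - 1), hnb, ?_, by simp⟩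
        refine mem_gBoundary.mpr ⟨?_, some u, by simp, wheel_adj_pred hm u⟩
        simp only [Finset.mem_insert, Finset.mem_singleton, Option.some.injEq] at hc ⊢
        have hv : u + 1 = v := hc.resolve_left (fun h => h1 (by linear_combination h))
        push_neg
        constructor
        · intro h; exact h1 (by linear_combination -h)
        · intro h; exact h2 (by linear_combination hv - h)
      · exact ⟨none, some (u + 1), hnb,
          mem_gBoundary.mpr ⟨hc, some u, by simp, wheel_adj_succ hm u⟩, by simp⟩
end Wheel

theorem complete_wheel_liapunov_vanish (n : ℕ) [NeZero (n - 1)] (hn : 4 ≤ n) :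
    (Bcoef (⊤ : SimpleGraph (Fin n)) 0 3 = 0 ∧ Bcoef (⊤ : SimpleGraph (Fin n)) 1 2 = 0 ∧
      Bcoef (⊤ : SimpleGraph (Fin n)) 2 1 = 0 ∧ Bcoef (⊤ : SimpleGraph (Fin n)) 0 2 = 0 ∧
      3 * Bcoef (⊤ : SimpleGraph (Fin n)) 0 3 + Bcoef (⊤ : SimpleGraph (Fin n)) 1 2 +
        Bcoef (⊤ : SimpleGraph (Fin n)) 2 1 + 2 * (Bcoef (⊤ : SimpleGraph (Fin n)) 0 2) ^ 2 = 0) ∧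
    (Bcoef (wheelGraph (n - 1)) 0 3 = 0 ∧ Bcoef (wheelGraph (n - 1)) 1 2 = 0 ∧
      Bcoef (wheelGraph (n - 1)) 2 1 = 0 ∧ Bcoef (wheelGraph (n - 1)) 0 2 = 0 ∧
      3 * Bcoef (wheelGraph (n - 1)) 0 3 + Bcoef (wheelGraph (n - 1)) 1 2 +
        Bcoef (wheelGraph (n - 1)) 2 1 + 2 * (Bcoef (wheelGraph (n - 1)) 0 2) ^ 2 = 0) := by
  have hK : ∀ i j : ℕ, 0 < j → n - j ≠ i → Bcoef (⊤ : SimpleGraph (Fin n)) i j = 0 := by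
    intro i j hj hij
    apply Bcoef_eq_zero
    intro S hS
    have hne : S.Nonempty := Finset.card_pos.mp (hS ▸ hj)
    rw [complete_gBoundary_card hne, hS]
    exact hij
  have hK03 := hK 0 3 (by norm_num) (by omega)
  have hK12 := hK 1 2 (by norm_num) (by omega)
  have hK21 := hK 2 1 (by norm_num) (by omega)
  have hK02 := hK 0 2 (by norm_num) (by omega)
  have hm : 3 ≤ n - 1 := by omega
  have hW0 : ∀ j : ℕ, 0 < j → j ≤ 3 → Bcoef (wheelGraph (n - 1)) 0 j = 0 := by
    intro j hj hj3
    apply Bcoef_eq_zero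
    intro S hS
    have hne : S.Nonempty := Finset.card_pos.mp (hS ▸ hj)
    have := wheel_boundary_nonempty hm hne (by omega)
    have := Finset.card_pos.mpr this
    omega
  have hW03 := hW0 3 (by norm_num) (by norm_num)
  have hW02 := hW0 2 (by norm_num) (by norm_num)
  have hW21 : Bcoef (wheelGraph (n - 1)) 2 1 = 0 := by
    apply Bcoef_eq_zero
    intro S hS
    obtain ⟨a, rfl⟩ := Finset.card_eq_one.mp hS
    have := wheel_singleton_boundary hm a
    omega
  have hW12 : Bcoef (wheelGraph (n - 1)) 1 2 = 0 := by
    apply Bcoef_eq_zero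
    intro S hS
    have := wheel_pair_boundary hm hS
    omega
  refine ⟨⟨hK03, hK12, hK21, hK02, ?_⟩, hW03, hW12, hW21, hW02, ?_⟩ <;>
    simp [hK03, hK12, hK21, hK02, hW03, hW12, hW21, hW02]
end
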